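/- The TPTL formula x.F F F (x = 0) (i.e., x.F(F(F(x ∈ [0,0])))) is not definable in MTL: there is no MTL formula φ such that for all data words w, w ⊨ φ iff w ⊨ x.F F F (x = 0). -/

import Mathlib

/-!
An MTL formula compares data differences only with its finitely many interval endpoints. Once
all data values are multiplied by an `M` beyond these endpoints, the formula sees only the signs
of differences, and then it cannot tell `3, 1, 2, 3, 4, …` from `3, 1, 3, 4, 5, …`: past
position `0` both are strictly increasing, and from position `0` the future positions of each
can be matched with those of the other, preserving the sign of the difference with the initial
value and the intermediate positions. Yet `x.F F F (x = 0)` holds on the first (position `3`)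
and fails on the second, which repeats its initial value only at position `2`.
-/

/-- Integers extended with `-∞` (`⊥`) and `+∞` (`⊤`), used as interval endpoints. -/
abbrev ExtEInt := WithBot (WithTop ℤ)

def ExtEInt.ofInt (n : ℤ) : ExtEInt := ((n : WithTop ℤ) : ExtEInt)

/-- An interval of integers, given by two (possibly infinite) endpoints and
openness flags. -/
structure Iv where
  lo : ExtEInt
  hi : ExtEInt
  loOpen : Bool
  hiOpen : Bool

/-- Membership of an integer in an interval. -/
def Iv.mem (I : Iv) (d : ℤ) : Prop :=
  (if I.loOpen then I.lo < ExtEInt.ofInt d else I.lo ≤ ExtEInt.ofInt d) ∧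
  (if I.hiOpen then ExtEInt.ofInt d < I.hi else ExtEInt.ofInt d ≤ I.hi)

/-- The interval `(-∞, +∞)`. -/
def Iv.univ : Iv := ⟨⊥, ⊤, true, true⟩

/-- The singleton interval `[n, n]`. -/
def Iv.pt (n : ℤ) : Iv := ⟨ExtEInt.ofInt n, ExtEInt.ofInt n, false, false⟩

/-- A data word: an infinite sequence of pairs of a set of propositions and a
natural number data value. -/
abbrev DataWord (P : Type) := ℕ → (Set P) × ℕ

/-- Syntax of MTL: atoms, negation, conjunction, and interval-constrained
strict until. -/
inductive MTL (P : Type) where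
  | atom : P → MTL P
  | neg  : MTL P → MTL P
  | and  : MTL P → MTL P → MTL P
  | untl : MTL P → Iv → MTL P → MTL P

/-- Satisfaction of an MTL formula at position `i` of data word `w`. -/
def MTL.sat {P : Type} (w : DataWord P) : ℕ → MTL P → Prop
  | i, .atom p => p ∈ (w i).1
  | i, .neg φ => ¬ MTL.sat w i φ
  | i, .and φ ψ => MTL.sat w i φ ∧ MTL.sat w i ψ
  | i, .untl φ I ψ => ∃ j, i < j ∧ MTL.sat w j ψ ∧
      I.mem (((w j).2 : ℤ) - ((w i).2 : ℤ)) ∧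
      ∀ k, i < k → k < j → MTL.sat w k φ

/-- A data word satisfies an MTL formula if it holds at position `0`. -/
def MTL.models {P : Type} (w : DataWord P) (φ : MTL P) : Prop := MTL.sat w 0 φ

/-- The until rank of an MTL formula. -/
def MTL.urk {P : Type} : MTL P → ℕ
  | .atom _ => 0
  | .neg φ => φ.urk
  | .and φ ψ => max φ.urk ψ.urk
  | .untl φ _ ψ => max φ.urk ψ.urk + 1

/-- All interval endpoints of until operators in the formula lie in `S`. -/
def MTL.endpointsIn {P : Type} : MTL P → Set ExtEInt → Prop
  | .atom _, _ => True
  | .neg φ, S => φ.endpointsIn S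
  | .and φ ψ, S => φ.endpointsIn S ∧ ψ.endpointsIn S
  | .untl φ I ψ, S => I.lo ∈ S ∧ I.hi ∈ S ∧ φ.endpointsIn S ∧ ψ.endpointsIn S

/-- Syntax of TPTL: atoms, register constraints, negation, conjunction,
strict until, and the freeze quantifier. -/
inductive TPTL (P V : Type) where
  | atom : P → TPTL P V
  | cstr : V → Iv → TPTL P V
  | neg : TPTL P V → TPTL P V
  | and : TPTL P V → TPTL P V → TPTL P V
  | untl : TPTL P V → TPTL P V → TPTL P V
  | freeze : V → TPTL P V → TPTL P V

/-- Satisfaction of a TPTL formula at position `i` of data word `w` under the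
register valuation `ν`. -/
def TPTL.sat {P V : Type} [DecidableEq V] (w : DataWord P) :
    ℕ → (V → ℕ) → TPTL P V → Prop
  | i, _, .atom p => p ∈ (w i).1
  | i, ν, .cstr x I => I.mem (((w i).2 : ℤ) - (ν x : ℤ))
  | i, ν, .neg φ => ¬ TPTL.sat w i ν φ
  | i, ν, .and φ ψ => TPTL.sat w i ν φ ∧ TPTL.sat w i ν ψ
  | i, ν, .untl φ ψ => ∃ j, i < j ∧ TPTL.sat w j ν ψ ∧
      ∀ k, i < k → k < j → TPTL.sat w k ν φ
  | i, ν, .freeze x φ => TPTL.sat w i (Function.update ν x (w i).2) φ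

/-- A data word satisfies a TPTL formula if it holds at position `0` under the
valuation mapping every register to the first data value. -/
def TPTL.models {P V : Type} [DecidableEq V] (w : DataWord P) (φ : TPTL P V) : Prop :=
  TPTL.sat w 0 (fun _ => (w 0).2) φ

/-- The until rank of a TPTL formula. -/
def TPTL.urk {P V : Type} : TPTL P V → ℕ
  | .atom _ => 0
  | .cstr _ _ => 0
  | .neg φ => φ.urk
  | .and φ ψ => max φ.urk ψ.urk
  | .untl φ ψ => max φ.urk ψ.urk + 1
  | .freeze _ φ => φ.urk

/-- All register constraints in the formula are equality tests `x ∈ [0,0]`. -/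
def TPTL.eqOnly {P V : Type} : TPTL P V → Prop
  | .atom _ => True
  | .cstr _ I => I = Iv.pt 0
  | .neg φ => φ.eqOnly
  | .and φ ψ => φ.eqOnly ∧ ψ.eqOnly
  | .untl φ ψ => φ.eqOnly ∧ ψ.eqOnly
  | .freeze _ φ => φ.eqOnly

/-- All endpoints of intervals in register constraints lie in `S`. -/
def TPTL.cstrIn {P V : Type} : TPTL P V → Set ExtEInt → Prop
  | .atom _, _ => True
  | .cstr _ I, S => I.lo ∈ S ∧ I.hi ∈ S
  | .neg φ, S => φ.cstrIn S
  | .and φ ψ, S => φ.cstrIn S ∧ ψ.cstrIn S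
  | .untl φ ψ, S => φ.cstrIn S ∧ ψ.cstrIn S
  | .freeze _ φ, S => φ.cstrIn S

/-- A TPTL truth constant: `x ∈ (-∞, +∞)`. -/
def ttu {P : Type} : TPTL P Unit := .cstr () Iv.univ

/-- The eventually operator `F φ := true U φ` (strict). -/
def Fu {P : Type} (φ : TPTL P Unit) : TPTL P Unit := .untl ttu φ

/-- The formula `x.F F F (x = 0)`. -/
def xFFF {P : Type} : TPTL P Unit :=
  .freeze () (Fu (Fu (Fu (.cstr () (Iv.pt 0)))))

open Filter

def boundedEndpoints (M : ℕ) : Set ExtEInt :=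
  {e | e = ⊥ ∨ e = ((⊤ : WithTop ℤ) : ExtEInt) ∨ ∃ n : ℤ, |n| < M ∧ e = ExtEInt.ofInt n}

lemma boundedEndpoints_mono : Monotone boundedEndpoints := by
  rintro M N hMN e (he | he | ⟨n, hn, rfl⟩)
  · exact Or.inl he
  · exact Or.inr (Or.inl he)
  · exact Or.inr (Or.inr ⟨n, by omega, rfl⟩)

lemma eventually_mem_boundedEndpoints (e : ExtEInt) :
    ∀ᶠ M in atTop, e ∈ boundedEndpoints M := by
  suffices ∃ M, e ∈ boundedEndpoints M by
    obtain ⟨M, hM⟩ := this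
    exact eventually_atTop.2 ⟨M, fun N hN => boundedEndpoints_mono hN hM⟩
  induction e using WithBot.recBotCoe with
  | bot => exact ⟨0, Or.inl rfl⟩
  | coe t =>
    induction t using WithTop.recTopCoe with
    | top => exact ⟨0, Or.inr (Or.inl rfl)⟩
    | coe n =>
      exact ⟨n.natAbs + 1, Or.inr (Or.inr ⟨n, by rw [Int.abs_eq_natAbs]; omega, rfl⟩)⟩

lemma MTL.eventually_endpointsIn_boundedEndpoints {P : Type} (φ : MTL P) :
    ∀ᶠ M in atTop, φ.endpointsIn (boundedEndpoints M) := by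
  induction φ with
  | atom p => exact .of_forall fun _ => trivial
  | neg φ ih => exact ih
  | and φ ψ ihφ ihψ => exact ihφ.and ihψ
  | untl φ I ψ ihφ ihψ =>
    exact (eventually_mem_boundedEndpoints I.lo).and
      ((eventually_mem_boundedEndpoints I.hi).and (ihφ.and ihψ))

lemma Int.sign_eq_sign_iff {x y : ℤ} :
    x.sign = y.sign ↔ (0 < x ↔ 0 < y) ∧ (x < 0 ↔ y < 0) := by
  grind [Int.sign_eq_neg_one_of_neg, Int.sign_eq_one_of_pos, Int.sign_zero]

lemma compare_ofInt_mul_congr {M : ℕ} {e : ExtEInt} (he : e ∈ boundedEndpoints M)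
    {k l : ℤ} (hkl : k.sign = l.sign) :
    (e ≤ .ofInt (k * M) ↔ e ≤ .ofInt (l * M)) ∧
      (e < .ofInt (k * M) ↔ e < .ofInt (l * M)) ∧
      (.ofInt (k * M) ≤ e ↔ .ofInt (l * M) ≤ e) ∧
      (.ofInt (k * M) < e ↔ .ofInt (l * M) < e) := by
  have hkl' :
      k * M = l * M ∨ (M ≤ k * M ∧ M ≤ l * M) ∨ (k * M ≤ -M ∧ l * M ≤ -M) := by
    rw [Int.sign_eq_sign_iff] at hkl
    rcases lt_trichotomy k 0 with hk | rfl | hk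
    · exact Or.inr (Or.inr ⟨by nlinarith, by nlinarith [hkl.2.1 hk]⟩)
    · obtain rfl : l = 0 := by omega
      exact Or.inl rfl
    · exact Or.inr (Or.inl ⟨by nlinarith, by nlinarith [hkl.1.1 hk]⟩)
  generalize k * (M : ℤ) = x, l * (M : ℤ) = y at hkl'
  rcases he with rfl | rfl | ⟨n, hn, rfl⟩
  · simp [ExtEInt.ofInt]
  · simp only [ExtEInt.ofInt, WithBot.coe_le_coe, WithBot.coe_lt_coe]
    simp
  · simp only [ExtEInt.ofInt, WithBot.coe_le_coe, WithBot.coe_lt_coe, WithTop.coe_le_coe,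
      WithTop.coe_lt_coe]
    rw [abs_lt] at hn
    omega

lemma Iv.mem_mul_congr {M : ℕ} {I : Iv} (hlo : I.lo ∈ boundedEndpoints M)
    (hhi : I.hi ∈ boundedEndpoints M) {k l : ℤ} (hkl : k.sign = l.sign) :
    I.mem (k * M) ↔ I.mem (l * M) := by
  obtain ⟨h₁, h₂, -, -⟩ := compare_ofInt_mul_congr hlo hkl
  obtain ⟨-, -, h₃, h₄⟩ := compare_ofInt_mul_congr hhi hkl
  unfold Iv.mem
  cases I.loOpen <;> cases I.hiOpen <;> simp only [if_true, Bool.false_eq_true, if_false] <;>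
    exact and_congr ‹_› ‹_›

namespace MTL

variable {P : Type}

def scaledWord (a : ℕ → ℕ) (M : ℕ) : DataWord P := fun i => (∅, a i * M)

lemma scaledWord_sub (a : ℕ → ℕ) (M i j : ℕ) :
    ((scaledWord (P := P) a M j).2 : ℤ) - (scaledWord (P := P) a M i).2 =
      ((a j : ℤ) - a i) * M := by
  simp only [scaledWord]
  push_cast
  ring

-- The forth half of an until-bisimulation between `scaledWord a M` and `scaledWord b M`; once `M`
-- exceeds every constant of a formula, only the signs of data differences are visible to it.
def IsSignSimulation (a b : ℕ → ℕ) (R : ℕ → ℕ → Prop) : Prop :=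
  ∀ i i', R i i' → ∀ j, i < j → ∃ j', i' < j' ∧ R j j' ∧
    ((a j : ℤ) - a i).sign = ((b j' : ℤ) - b i').sign ∧
    ∀ k', i' < k' → k' < j' → ∃ k, i < k ∧ k < j ∧ R k k'

lemma sat_untl_of_isSignSimulation {a b : ℕ → ℕ} {R : ℕ → ℕ → Prop}
    (hR : IsSignSimulation a b R) {M : ℕ} {φ ψ : MTL P} {I : Iv}
    (hlo : I.lo ∈ boundedEndpoints M) (hhi : I.hi ∈ boundedEndpoints M)
    (hφ : ∀ k k', R k k' → sat (scaledWord a M) k φ → sat (scaledWord b M) k' φ)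
    (hψ : ∀ k k', R k k' → sat (scaledWord a M) k ψ → sat (scaledWord b M) k' ψ)
    {i i' : ℕ} (hii' : R i i') (h : sat (scaledWord a M) i (.untl φ I ψ)) :
    sat (scaledWord b M) i' (.untl φ I ψ) := by
  obtain ⟨j, hij, hψj, hmem, hφ_between⟩ := h
  obtain ⟨j', hij', hjj', hsign, hback⟩ := hR i i' hii' j hij
  refine ⟨j', hij', hψ j j' hjj' hψj, ?_, fun k' hik' hk'j' => ?_⟩
  · rw [scaledWord_sub] at hmem ⊢
    exact (Iv.mem_mul_congr hlo hhi hsign).1 hmem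
  · obtain ⟨k, hik, hkj, hkk'⟩ := hback k' hik' hk'j'
    exact hφ k k' hkk' (hφ_between k hik hkj)

theorem sat_scaledWord_iff {a b : ℕ → ℕ} {R : ℕ → ℕ → Prop}
    (hab : IsSignSimulation a b R) (hba : IsSignSimulation b a (flip R)) {M : ℕ} {φ : MTL P}
    (hφ : φ.endpointsIn (boundedEndpoints M)) {i i' : ℕ} (hii' : R i i') :
    sat (scaledWord a M) i φ ↔ sat (scaledWord b M) i' φ := by
  induction φ generalizing i i' with
  | atom p => simp [MTL.sat, scaledWord]
  | neg φ ih => exact not_congr (ih hφ hii')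
  | and φ ψ ihφ ihψ => exact and_congr (ihφ hφ.1 hii') (ihψ hφ.2 hii')
  | untl φ I ψ ihφ ihψ =>
    obtain ⟨hlo, hhi, hφ, hψ⟩ := hφ
    exact ⟨sat_untl_of_isSignSimulation hab hlo hhi (fun k k' h => (ihφ hφ h).1)
        (fun k k' h => (ihψ hψ h).1) hii',
      sat_untl_of_isSignSimulation hba hlo hhi (fun k' k h => (ihφ hφ h).2)
        (fun k' k h => (ihψ hψ h).2) hii'⟩

end MTL

lemma Iv.mem_univ (d : ℤ) : Iv.univ.mem d :=
  ⟨WithBot.bot_lt_coe _, WithBot.coe_lt_coe.2 (WithTop.coe_lt_top d)⟩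

lemma Iv.mem_pt_iff {n d : ℤ} : (Iv.pt n).mem d ↔ d = n := by
  simp only [Iv.pt, Iv.mem, ExtEInt.ofInt, Bool.false_eq_true, if_false, WithBot.coe_le_coe,
    WithTop.coe_le_coe]
  omega

lemma TPTL.sat_Fu_iff {P : Type} {w : DataWord P} {i : ℕ} {ν : Unit → ℕ} {φ : TPTL P Unit} :
    (Fu φ).sat w i ν ↔ ∃ j, i < j ∧ φ.sat w j ν :=
  ⟨fun ⟨j, hij, hφ, _⟩ => ⟨j, hij, hφ⟩,
    fun ⟨j, hij, hφ⟩ => ⟨j, hij, hφ, fun _ _ _ => Iv.mem_univ _⟩⟩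

lemma TPTL.models_xFFF_iff {P : Type} (w : DataWord P) :
    TPTL.models w xFFF ↔ ∃ j, 3 ≤ j ∧ (w j).2 = (w 0).2 := by
  simp only [TPTL.models, xFFF, TPTL.sat, TPTL.sat_Fu_iff, Iv.mem_pt_iff, Function.update_self,
    sub_eq_zero, Nat.cast_inj]
  constructor
  · rintro ⟨j₁, h₁, j₂, h₂, j₃, h₃, h⟩
    exact ⟨j₃, by omega, h⟩
  · rintro ⟨j, hj, h⟩
    exact ⟨1, by omega, 2, by omega, j, by omega, h⟩

-- `3, 1, 2, 3, 4, …` and the same sequence with position `2` deleted.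
def valsRepeat (i : ℕ) : ℕ := if i = 0 then 3 else i

def valsSkip (i : ℕ) : ℕ := if i = 0 then 3 else if i = 1 then 1 else i + 1

-- Past position `0` both sequences are strictly increasing, so all those positions look alike.
def initialMatch (i i' : ℕ) : Prop := (i = 0 ↔ i' = 0)

lemma isSignSimulation_valsRepeat_valsSkip :
    MTL.IsSignSimulation valsRepeat valsSkip initialMatch := by
  intro i i' hii' j hij
  rcases Nat.eq_zero_or_pos i with rfl | hi
  · obtain rfl : i' = 0 := hii'.1 rfl
    refine ⟨if j ≤ 2 then 1 else if j = 3 then 2 else j, ?_, ?_, ?_,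
      fun k' hk' hk'j' => ⟨k', hk', ?_, Iff.rfl⟩⟩ <;>
      grind [initialMatch, valsRepeat, valsSkip, Int.sign_eq_sign_iff]
  · refine ⟨i' + 1, by omega, ?_, ?_, fun k' _ _ => by omega⟩ <;>
      grind [initialMatch, valsRepeat, valsSkip, Int.sign_eq_sign_iff]

lemma isSignSimulation_valsSkip_valsRepeat :
    MTL.IsSignSimulation valsSkip valsRepeat (flip initialMatch) := by
  intro i' i hii' j' hij'
  rcases Nat.eq_zero_or_pos i' with rfl | hi'
  · obtain rfl : i = 0 := hii'.2 rfl
    refine ⟨if j' = 1 then 1 else j' + 1, ?_, ?_, ?_,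
      fun k hk hkj => ⟨max (k - 1) 1, ?_, ?_, ?_⟩⟩ <;>
      grind [flip, initialMatch, valsRepeat, valsSkip, Int.sign_eq_sign_iff]
  · refine ⟨i + 1, by omega, ?_, ?_, fun k _ _ => by omega⟩ <;>
      grind [flip, initialMatch, valsRepeat, valsSkip, Int.sign_eq_sign_iff]

/-- The TPTL formula `x.F F F (x = 0)` is not definable in MTL. -/
theorem xFFF_not_mtl_definable {P : Type} :
    ¬ ∃ φ : MTL P, ∀ w : DataWord P, MTL.models w φ ↔ TPTL.models w xFFF := by
  rintro ⟨φ, hφ⟩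
  obtain ⟨M, hφM, hM⟩ :=
    (φ.eventually_endpointsIn_boundedEndpoints.and (eventually_gt_atTop 0)).exists
  have hRepeat : TPTL.models (MTL.scaledWord (P := P) valsRepeat M) xFFF :=
    (TPTL.models_xFFF_iff _).2 ⟨3, le_rfl, rfl⟩
  have hSkip : ¬ TPTL.models (MTL.scaledWord (P := P) valsSkip M) xFFF := by
    rw [TPTL.models_xFFF_iff]
    rintro ⟨j, hj, h⟩
    simp [MTL.scaledWord, valsSkip, show j ≠ 0 by omega, show j ≠ 1 by omega, hM.ne'] at h
    omega
  have hequiv := MTL.sat_scaledWord_iff isSignSimulation_valsRepeat_valsSkip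
    isSignSimulation_valsSkip_valsRepeat hφM (i := 0) (i' := 0) Iff.rfl
  exact hSkip ((hφ _).1 (hequiv.1 ((hφ _).2 hRepeat)))
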